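/- Suppose a sequence of pruning operations of types P_A and P_C is applied to the search tree 𝒯(G,π₀): P_A(ν,ν') removes the subtree at ν' whenever |ν|=|ν'| and φ(G,π₀,ν) > φ(G,π₀,ν'); P_C(ν,g) with g ∈ Aut(G,π₀) and ν < ν^g removes the subtree at ν^g (in lexicographic order on sequences). Then at least one leaf ν₁ with φ(G,π₀,ν₁) = φ*(G,π₀) (the maximum invariant value over all leaves) remains in the pruned tree. -/

import Mathlib

/-- Relabelling action of a permutation on a graph: `v^g` adjacent to `w^g` iff `v` adjacent `w`. -/
def gactG {n : ℕ} (g : Equiv.Perm (Fin n)) (G : SimpleGraph (Fin n)) : SimpleGraph (Fin n) where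
  Adj v w := G.Adj (g⁻¹ v) (g⁻¹ w)
  symm := ⟨fun _ _ h => G.symm.symm _ _ h⟩
  loopless := ⟨fun _ h => G.loopless.irrefl _ h⟩

/-- Relabelling action of a permutation on a colouring. -/
def gactC {n : ℕ} (g : Equiv.Perm (Fin n)) (π : Fin n → ℕ) : Fin n → ℕ :=
  fun v => π (g⁻¹ v)

/-- A colouring of `V`: a function surjective onto `{1,…,k}` for some `k`. -/
def IsCol {n : ℕ} (π : Fin n → ℕ) : Prop := ∃ k, Set.range π = Set.Icc 1 k

/-- `π'` is finer than or equal to `π`. -/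
def FinerC {n : ℕ} (π' π : Fin n → ℕ) : Prop := ∀ v w, π v < π w → π' v < π' w

/-- Nodes of the search tree with child rule given by the target cells `Tc`. -/
inductive IsTNode {n : ℕ} (Tc : List (Fin n) → Set (Fin n)) : List (Fin n) → Prop
  | root : IsTNode Tc []
  | child {ν : List (Fin n)} {w : Fin n} :
      IsTNode Tc ν → w ∈ Tc ν → IsTNode Tc (ν ++ [w])

/-- The labelled graph `G^π` for a (discrete) colouring `π`, as a set of labelled edges. -/
def relabelSet {n : ℕ} (G : SimpleGraph (Fin n)) (π : Fin n → ℕ) : Set (ℕ × ℕ) :=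
  {p | ∃ v w, G.Adj v w ∧ π v = p.1 ∧ π w = p.2}

/-- Equitable colouring: same-coloured vertices have equally many neighbours of each colour. -/
def IsEquit {n : ℕ} (G : SimpleGraph (Fin n)) (π : Fin n → ℕ) : Prop :=
  ∀ v w, π v = π w → ∀ j,
    {u | G.Adj v u ∧ π u = j}.ncard = {u | G.Adj w u ∧ π u = j}.ncard

/-! The lexicographically least leaf `ν₁` among those of maximal invariant survives every pruning.
A node `μ` removed by `P_A(ν, μ)` lies at the level of a node `ν` of larger invariant, so by (φ1)
every leaf below `μ` has smaller invariant than some leaf below `ν`, and `μ` is not a prefix of the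
maximal leaf `ν₁`. A node `ν^g` removed by `P_C(ν, g)` is not a prefix of `ν₁` either: otherwise
`ν₁^{g⁻¹}` is a leaf (R3, T3) with the same invariant (φ3) which starts with `ν < ν^g`, hence is
lexicographically smaller than `ν₁`. -/

theorem List.Lex.append_of_length_eq {α : Type*} {r : α → α → Prop} {a b : List α}
    (h : List.Lex r a b) (hlen : a.length = b.length) (s t : List α) :
    List.Lex r (a ++ s) (b ++ t) := by
  induction h with
  | nil => simp at hlen
  | cons _ ih => exact .cons (ih (by simpa using hlen))
  | rel h => exact .rel h

theorem gactG_inv_eq_self {n : ℕ} {g : Equiv.Perm (Fin n)} {G : SimpleGraph (Fin n)}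
    (h : gactG g G = G) : gactG g⁻¹ G = G := by
  conv_lhs => rw [← h]
  ext v w
  simp [gactG]

theorem gactC_inv_eq_self {n : ℕ} {g : Equiv.Perm (Fin n)} {π : Fin n → ℕ}
    (h : gactC g π = π) : gactC g⁻¹ π = π := by
  conv_lhs => rw [← h]
  funext v
  simp [gactC]

theorem notMem_of_mem_fiber_of_nontrivial {n : ℕ} {f : Fin n → ℕ} {ν : List (Fin n)} {j : ℕ}
    (hν : ∀ v ∈ ν, f ⁻¹' {f v} = {v}) {w : Fin n} (hw : w ∈ f ⁻¹' {j})
    (hj : (f ⁻¹' {j}).Nontrivial) : w ∉ ν := by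
  intro hwν
  rw [Set.mem_preimage, Set.mem_singleton_iff] at hw
  rw [← hw, hν w hwν] at hj
  exact Set.not_nontrivial_singleton hj

namespace IsTNode

variable {n : ℕ} {Tc : List (Fin n) → Set (Fin n)} {ν : List (Fin n)}

theorem nodup (hTc : ∀ ν, ∀ w ∈ Tc ν, w ∉ ν) (h : IsTNode Tc ν) : ν.Nodup := by
  induction h with
  | root => exact List.nodup_nil
  | child _ hw ih => exact ih.append (List.nodup_singleton _) (by simpa using hTc _ _ hw)

theorem length_le (hTc : ∀ ν, ∀ w ∈ Tc ν, w ∉ ν) (h : IsTNode Tc ν) : ν.length ≤ n := by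
  simpa using (h.nodup hTc).length_le_card

theorem map {g : Equiv.Perm (Fin n)} (hg : ∀ ν, Tc (ν.map g) = g '' Tc ν) (h : IsTNode Tc ν) :
    IsTNode Tc (ν.map g) := by
  induction h with
  | root => exact root
  | @child ν w _ hw ih =>
    rw [List.map_append, List.map_singleton]
    exact ih.child (by rw [hg]; exact Set.mem_image_of_mem g hw)

theorem exists_extension (hTc : ∀ ν, ∀ w ∈ Tc ν, w ∉ ν) {P : List (Fin n) → Prop}
    (hP : ∀ ν, ¬ P ν → (Tc ν).Nonempty) {ν : List (Fin n)} (h : IsTNode Tc ν) :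
    ∃ ν', IsTNode Tc ν' ∧ P ν' ∧ ν <+: ν' := by
  by_cases hν : P ν
  · exact ⟨ν, h, hν, List.prefix_refl ν⟩
  obtain ⟨w, hw⟩ := hP ν hν
  have hchild := h.child hw
  have : ν.length < n := by simpa using hchild.length_le hTc
  obtain ⟨ν', h', hP', hpre⟩ := hchild.exists_extension hTc hP
  exact ⟨ν', h', hP', (List.prefix_append ν [w]).trans hpre⟩
termination_by n - ν.length

theorem finite_setOf (hTc : ∀ ν, ∀ w ∈ Tc ν, w ∉ ν) : {ν | IsTNode Tc ν}.Finite :=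
  (List.finite_length_le (Fin n) n).subset fun _ h => length_le hTc h

end IsTNode

theorem Set.Finite.exists_min_of_max_image {α β : Type*} [LinearOrder α] [LinearOrder β]
    {s : Set α} (hs : s.Finite) (hne : s.Nonempty) (f : α → β) :
    ∃ a ∈ s, (∀ b ∈ s, f b ≤ f a) ∧ ∀ b ∈ s, f a ≤ f b → a ≤ b := by
  obtain ⟨m, hm, hmax⟩ := Set.exists_max_image s f hs hne
  obtain ⟨a, ⟨ha, hma⟩, hmin⟩ := Set.exists_min_image {b ∈ s | f m ≤ f b} id
    (hs.subset fun _ hb => hb.1) ⟨m, hm, le_rfl⟩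
  exact ⟨a, ha, fun b hb => (hmax b hb).trans hma, fun b hb hab => hmin b ⟨hb, hma.trans hab⟩⟩

theorem not_prefix_of_lex_map {α Ω : Type*} [LinearOrder α] [LinearOrder Ω]
    {L : Set (List α)} {ψ : List α → Ω} {ν₁ : List α} (g : Equiv.Perm α)
    (hL : ∀ ν ∈ L, ν.map ⇑g⁻¹ ∈ L) (hψ : ∀ ν, ψ (ν.map ⇑g⁻¹) = ψ ν) (hν₁ : ν₁ ∈ L)
    (hleast : ∀ ν ∈ L, ψ ν₁ ≤ ψ ν → ν₁ ≤ ν) {ν : List α} (hlex : List.Lex (· < ·) ν (ν.map g)) :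
    ¬ ν.map g <+: ν₁ := by
  rintro ⟨t, rfl⟩
  have hpre : (ν.map g ++ t).map ⇑g⁻¹ = ν ++ t.map ⇑g⁻¹ := by simp [List.map_map]
  have hle := hleast _ (hL _ hν₁) (hψ _).ge
  rw [hpre] at hle
  exact not_lt_of_ge hle (hlex.append_of_length_eq (by simp) _ _)

theorem not_prefix_of_invariant_lt {n : ℕ} {Ω : Type*} [LinearOrder Ω]
    {Tc : List (Fin n) → Set (Fin n)} {P : List (Fin n) → Prop} {ψ : List (Fin n) → Ω}
    (hTc : ∀ ν, ∀ w ∈ Tc ν, w ∉ ν) (hP : ∀ ν, ¬ P ν → (Tc ν).Nonempty)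
    (hψ : ∀ ν ν', IsTNode Tc ν → IsTNode Tc ν' → ν ≠ ν' → ν.length = ν'.length → ψ ν < ψ ν' →
      ∀ ν₁ ν₁', IsTNode Tc ν₁ → ν <+: ν₁ → P ν₁ → IsTNode Tc ν₁' → ν' <+: ν₁' → P ν₁' →
        ψ ν₁ < ψ ν₁')
    {ν₁ : List (Fin n)} (hν₁ : IsTNode Tc ν₁) (hP₁ : P ν₁)
    (hmax : ∀ μ, IsTNode Tc μ → P μ → ψ μ ≤ ψ ν₁)
    {μ ν : List (Fin n)} (hμ : IsTNode Tc μ) (hν : IsTNode Tc ν) (hne : ν ≠ μ)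
    (hlen : ν.length = μ.length) (hlt : ψ μ < ψ ν) : ¬ μ <+: ν₁ := by
  intro hpre
  obtain ⟨ν', hν', hP', hpre'⟩ := hν.exists_extension hTc hP
  exact (hmax ν' hν' hP').not_gt (hψ μ ν hμ hν hne.symm hlen.symm hlt ν₁ ν' hν₁ hpre hP₁ hν' hpre' hP')

theorem isTNode_map_and_injective_of_gact_eq {n : ℕ}
    {R : SimpleGraph (Fin n) → (Fin n → ℕ) → List (Fin n) → (Fin n → ℕ)}
    {T : SimpleGraph (Fin n) → (Fin n → ℕ) → List (Fin n) → Set (Fin n)}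
    (hR3 : ∀ G π ν (g : Equiv.Perm (Fin n)),
      R (gactG g G) (gactC g π) (ν.map g) = gactC g (R G π ν))
    (hT3 : ∀ G π ν (g : Equiv.Perm (Fin n)),
      T (gactG g G) (gactC g π) (ν.map g) = g '' (T G π ν))
    {G : SimpleGraph (Fin n)} {π₀ : Fin n → ℕ} {g : Equiv.Perm (Fin n)}
    (hG : gactG g G = G) (hπ : gactC g π₀ = π₀) {ν : List (Fin n)}
    (hν : IsTNode (T G π₀) ν) (hinj : Function.Injective (R G π₀ ν)) :
    IsTNode (T G π₀) (ν.map g) ∧ Function.Injective (R G π₀ (ν.map g)) := by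
  refine ⟨hν.map fun ν => by simpa only [hG, hπ] using hT3 G π₀ ν g, ?_⟩
  rw [← hG, ← hπ, hR3]
  exact hinj.comp (Equiv.injective _)

theorem stmt13_general {n : ℕ} {Ω : Type*} [LinearOrder Ω]
    (R : SimpleGraph (Fin n) → (Fin n → ℕ) → List (Fin n) → (Fin n → ℕ))
    (T : SimpleGraph (Fin n) → (Fin n → ℕ) → List (Fin n) → Set (Fin n))
    (hR2 : ∀ G π ν, ∀ v ∈ ν, (R G π ν) ⁻¹' {R G π ν v} = {v})
    (hR3 : ∀ G π ν (g : Equiv.Perm (Fin n)),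
      R (gactG g G) (gactC g π) (ν.map g) = gactC g (R G π ν))
    (hT1 : ∀ G π ν, Function.Injective (R G π ν) → T G π ν = ∅)
    (hT2 : ∀ G π ν, ¬ Function.Injective (R G π ν) →
      ∃ j, T G π ν = (R G π ν) ⁻¹' {j} ∧ ∃ v w, v ∈ T G π ν ∧ w ∈ T G π ν ∧ v ≠ w)
    (hT3 : ∀ G π ν (g : Equiv.Perm (Fin n)),
      T (gactG g G) (gactC g π) (ν.map g) = g '' (T G π ν))
    (φ : SimpleGraph (Fin n) → (Fin n → ℕ) → List (Fin n) → Ω)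
    (hφ1 : ∀ (G : SimpleGraph (Fin n)) (π₀ : Fin n → ℕ) (ν ν' : List (Fin n)),
      IsTNode (T G π₀) ν → IsTNode (T G π₀) ν' → ν ≠ ν' → ν.length = ν'.length →
      φ G π₀ ν < φ G π₀ ν' →
      ∀ ν₁ ν₁', IsTNode (T G π₀) ν₁ → ν <+: ν₁ → Function.Injective (R G π₀ ν₁) →
        IsTNode (T G π₀) ν₁' → ν' <+: ν₁' → Function.Injective (R G π₀ ν₁') →
        φ G π₀ ν₁ < φ G π₀ ν₁')
    (hφ3 : ∀ (G : SimpleGraph (Fin n)) (π₀ : Fin n → ℕ) (ν : List (Fin n))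
      (g : Equiv.Perm (Fin n)), φ (gactG g G) (gactC g π₀) (ν.map g) = φ G π₀ ν)
    (G : SimpleGraph (Fin n)) (π₀ : Fin n → ℕ)
    (S : Set (List (Fin n)))
    (hS : ∀ μ ∈ S,
      -- operation P_A(ν,μ)
      (∃ ν, IsTNode (T G π₀) ν ∧ IsTNode (T G π₀) μ ∧ ν ≠ μ ∧
        ν.length = μ.length ∧ φ G π₀ μ < φ G π₀ ν) ∨
      -- operation P_C(ν,g) removing μ = ν^g with ν < ν^g
      (∃ (ν : List (Fin n)) (g : Equiv.Perm (Fin n)),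
        gactG g G = G ∧ gactC g π₀ = π₀ ∧ IsTNode (T G π₀) ν ∧
        μ = ν.map g ∧ List.Lex (· < ·) ν μ)) :
    ∃ ν₁ : List (Fin n), IsTNode (T G π₀) ν₁ ∧ Function.Injective (R G π₀ ν₁) ∧
      (∀ μ, IsTNode (T G π₀) μ → Function.Injective (R G π₀ μ) →
        φ G π₀ μ ≤ φ G π₀ ν₁) ∧
      ∀ μ ∈ S, ¬ μ <+: ν₁ := by
  have hTc : ∀ ν, ∀ w ∈ T G π₀ ν, w ∉ ν := fun ν w hw => by
    by_cases hinj : Function.Injective (R G π₀ ν)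
    · simp [hT1 G π₀ ν hinj] at hw
    · obtain ⟨j, hj, u, v, hu, hv, huv⟩ := hT2 G π₀ ν hinj
      rw [hj] at hw hu hv
      exact notMem_of_mem_fiber_of_nontrivial (hR2 G π₀ ν) hw ⟨u, hu, v, hv, huv⟩
  have hP : ∀ ν, ¬ Function.Injective (R G π₀ ν) → (T G π₀ ν).Nonempty := fun ν hinj =>
    let ⟨_, _, u, _, hu, _⟩ := hT2 G π₀ ν hinj; ⟨u, hu⟩
  obtain ⟨ν₀, h₀, hinj₀, -⟩ := IsTNode.root.exists_extension hTc hP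
  set L := {ν | IsTNode (T G π₀) ν ∧ Function.Injective (R G π₀ ν)}
  have hL : L.Finite := (IsTNode.finite_setOf hTc).subset fun _ h => h.1
  obtain ⟨ν₁, ⟨hν₁, hinj₁⟩, hmax, hleast⟩ := hL.exists_min_of_max_image ⟨ν₀, h₀, hinj₀⟩ (φ G π₀)
  have hmax' : ∀ μ, IsTNode (T G π₀) μ → Function.Injective (R G π₀ μ) →
      φ G π₀ μ ≤ φ G π₀ ν₁ := fun μ hμ hinj => hmax μ ⟨hμ, hinj⟩
  refine ⟨ν₁, hν₁, hinj₁, hmax', fun μ hμS => ?_⟩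
  rcases hS μ hμS with ⟨ν, hν, hμ, hne, hlen, hlt⟩ | ⟨ν, g, hG, hπ, -, rfl, hlex⟩
  · exact not_prefix_of_invariant_lt hTc hP (hφ1 G π₀) hν₁ hinj₁ hmax' hμ hν hne hlen hlt
  · have hG' := gactG_inv_eq_self hG
    have hπ' := gactC_inv_eq_self hπ
    exact not_prefix_of_lex_map (L := L) g
      (fun _ hν => isTNode_map_and_injective_of_gact_eq hR3 hT3 hG' hπ' hν.1 hν.2)
      (fun ν => by simpa only [hG', hπ'] using hφ3 G π₀ ν g⁻¹) ⟨hν₁, hinj₁⟩ hleast hlex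

/-- After any sequence of P_A and P_C prunings, some φ-maximal leaf remains. -/
theorem stmt13 {n : ℕ} {Ω : Type*} [LinearOrder Ω]
    (R : SimpleGraph (Fin n) → (Fin n → ℕ) → List (Fin n) → (Fin n → ℕ))
    (T : SimpleGraph (Fin n) → (Fin n → ℕ) → List (Fin n) → Set (Fin n))
    (hR1 : ∀ G π ν, FinerC (R G π ν) π)
    (hR2 : ∀ G π ν, ∀ v ∈ ν, (R G π ν) ⁻¹' {R G π ν v} = {v})
    (hR3 : ∀ G π ν (g : Equiv.Perm (Fin n)),
      R (gactG g G) (gactC g π) (ν.map g) = gactC g (R G π ν))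
    (hT1 : ∀ G π ν, Function.Injective (R G π ν) → T G π ν = ∅)
    (hT2 : ∀ G π ν, ¬ Function.Injective (R G π ν) →
      ∃ j, T G π ν = (R G π ν) ⁻¹' {j} ∧ ∃ v w, v ∈ T G π ν ∧ w ∈ T G π ν ∧ v ≠ w)
    (hT3 : ∀ G π ν (g : Equiv.Perm (Fin n)),
      T (gactG g G) (gactC g π) (ν.map g) = g '' (T G π ν))
    (φ : SimpleGraph (Fin n) → (Fin n → ℕ) → List (Fin n) → Ω)
    (hφ1 : ∀ (G : SimpleGraph (Fin n)) (π₀ : Fin n → ℕ) (ν ν' : List (Fin n)),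
      IsTNode (T G π₀) ν → IsTNode (T G π₀) ν' → ν ≠ ν' → ν.length = ν'.length →
      φ G π₀ ν < φ G π₀ ν' →
      ∀ ν₁ ν₁', IsTNode (T G π₀) ν₁ → ν <+: ν₁ → Function.Injective (R G π₀ ν₁) →
        IsTNode (T G π₀) ν₁' → ν' <+: ν₁' → Function.Injective (R G π₀ ν₁') →
        φ G π₀ ν₁ < φ G π₀ ν₁')
    (hφ2 : ∀ (G : SimpleGraph (Fin n)) (π₀ : Fin n → ℕ) (ν ν' : List (Fin n)),
      IsTNode (T G π₀) ν → IsTNode (T G π₀) ν' →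
      Function.Injective (R G π₀ ν) → Function.Injective (R G π₀ ν') →
      (φ G π₀ ν = φ G π₀ ν' ↔ relabelSet G (R G π₀ ν) = relabelSet G (R G π₀ ν')))
    (hφ3 : ∀ (G : SimpleGraph (Fin n)) (π₀ : Fin n → ℕ) (ν : List (Fin n))
      (g : Equiv.Perm (Fin n)), φ (gactG g G) (gactC g π₀) (ν.map g) = φ G π₀ ν)
    (G : SimpleGraph (Fin n)) (π₀ : Fin n → ℕ)
    (S : Set (List (Fin n)))
    (hS : ∀ μ ∈ S,
      -- operation P_A(ν,μ)
      (∃ ν, IsTNode (T G π₀) ν ∧ IsTNode (T G π₀) μ ∧ ν ≠ μ ∧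
        ν.length = μ.length ∧ φ G π₀ μ < φ G π₀ ν) ∨
      -- operation P_C(ν,g) removing μ = ν^g with ν < ν^g
      (∃ (ν : List (Fin n)) (g : Equiv.Perm (Fin n)),
        gactG g G = G ∧ gactC g π₀ = π₀ ∧ IsTNode (T G π₀) ν ∧
        μ = ν.map g ∧ List.Lex (· < ·) ν μ)) :
    ∃ ν₁ : List (Fin n), IsTNode (T G π₀) ν₁ ∧ Function.Injective (R G π₀ ν₁) ∧
      (∀ μ, IsTNode (T G π₀) μ → Function.Injective (R G π₀ μ) →
        φ G π₀ μ ≤ φ G π₀ ν₁) ∧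
      ∀ μ ∈ S, ¬ μ <+: ν₁ :=
  stmt13_general R T hR2 hR3 hT1 hT2 hT3 φ hφ1 hφ3 G π₀ S hS
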